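/- arXiv:0912.2138 — 2 statements merged into one kernel-verified Lean document; each statement's English description precedes it below -/
import Mathlib

section
/- Let α > 2 be a real number and D > 0. Let u = (1, 0) and v = (1/2, √3/2) in ℝ², and let Λ = {D·(a·u + b·v) : (a, b) ∈ ℤ², (a, b) ≠ (0, 0)} be the set of nonzero points of the hexagonal lattice scaled to minimum distance D. Then the family (‖x‖^(−α))_{x ∈ Λ} is summable and Σ_{x ∈ Λ} ‖x‖^(−α) ≤ 6·D^(−α)·(1 + (2/√3)^α · 1/(α−2)). -/
/-!
A nonzero lattice point `D • (a • u + b • v)` has squared length `D² (a² + a b + b²)`, which is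
at least `D²` and at least `(3/4) D² n²`, where `n = max (|a|, |b|, |a + b|)` indexes the
hexagonal shell containing the point. The `n`-th shell is the orbit of one side of `n` points
under the rotation by `60°`, so it has `6 n` points. Grouping the sum by shells bounds it by
`6 D^(-α) (1 + (2/√3)^α ∑_{n ≥ 2} n^(1-α))`, and the last series is at most
`∫_1^∞ x^(1-α) dx = 1/(α-2)`.
-/

open Finset

lemma sum_le_sum_image_mul_of_card_fiber_le {β ι R : Type*} [DecidableEq ι]
    [CommSemiring R] [PartialOrder R] [IsOrderedRing R]
    (s : Finset β) (N : β → ι) (f : β → R) (g : ι → R) (c : ι → ℕ)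
    (hf : ∀ q ∈ s, f q ≤ g (N q)) (hg : ∀ n, 0 ≤ g n)
    (hc : ∀ n, #{q ∈ s | N q = n} ≤ c n) :
    ∑ q ∈ s, f q ≤ ∑ n ∈ s.image N, (c n : R) * g n := by
  rw [← sum_fiberwise_of_maps_to fun q hq ↦ mem_image_of_mem N hq]
  gcongr with n
  calc ∑ q ∈ s with N q = n, f q
      ≤ ∑ q ∈ s with N q = n, g n := sum_le_sum fun q hq ↦ by
        obtain ⟨hqs, rfl⟩ := mem_filter.1 hq
        exact hf q hqs
    _ = #{q ∈ s | N q = n} * g n := by rw [sum_const, nsmul_eq_mul]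
    _ ≤ c n * g n := by gcongr; exacts [hg n, hc n]

lemma sum_range_add_two_rpow_neg_le {s : ℝ} (hs : 1 < s) (m : ℕ) :
    ∑ i ∈ range m, ((i : ℝ) + 2) ^ (-s) ≤ 1 / (s - 1) := by
  have hanti : AntitoneOn (fun x : ℝ ↦ x ^ (-s)) (Set.Icc 1 (1 + m)) :=
    fun x hx y _ hxy ↦ Real.rpow_le_rpow_of_nonpos (by linarith [hx.1]) hxy (by linarith)
  have hzero : (0 : ℝ) ∉ Set.uIcc (1 : ℝ) (1 + m) := by
    rw [Set.uIcc_of_le (by simp)]; simp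
  calc ∑ i ∈ range m, ((i : ℝ) + 2) ^ (-s)
      = ∑ i ∈ range m, (1 + ((i + 1 : ℕ) : ℝ)) ^ (-s) := by push_cast; ring_nf
    _ ≤ ∫ x in (1 : ℝ)..1 + m, x ^ (-s) := hanti.sum_le_integral
    _ = (1 - (1 + m) ^ (1 - s)) / (s - 1) := by
        rw [integral_rpow (Or.inr ⟨by linarith, hzero⟩), Real.one_rpow,
          show -s + 1 = -(s - 1) by ring, div_neg, ← neg_div]
        ring_nf
    _ ≤ 1 / (s - 1) := by
        have := Real.rpow_nonneg (by positivity : (0 : ℝ) ≤ 1 + m) (1 - s)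
        gcongr
        linarith

def hexNorm (q : ℤ × ℤ) : ℕ := max (max q.1.natAbs q.2.natAbs) (q.1 + q.2).natAbs

lemma hexNorm_ne_zero {q : ℤ × ℤ} (hq : q ≠ 0) : hexNorm q ≠ 0 := by
  obtain ⟨a, b⟩ := q
  rw [ne_eq, Prod.mk_eq_zero, not_and_or] at hq
  simp only [hexNorm]
  omega

/-- Rotation by `60°` in the coordinates of the basis `u, v`. -/
def hexRotate (q : ℤ × ℤ) : ℤ × ℤ := (-q.2, q.1 + q.2)

lemma exists_hexRotate_iterate_eq {q : ℤ × ℤ} (hq : q ≠ 0) :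
    ∃ k < 6, ∃ j ∈ Ico (0 : ℤ) (hexNorm q), hexRotate^[k] (hexNorm q, -j) = q := by
  obtain ⟨a, b⟩ := q
  have hn0 := hexNorm_ne_zero hq
  set n := hexNorm (a, b) with hn
  simp only [hexNorm] at hn
  have side : (a = n ∧ -n < b ∧ b ≤ 0) ∨ (a + b = n ∧ 0 ≤ a ∧ a < n) ∨
      (b = n ∧ -n ≤ a ∧ a < 0) ∨ (a = -n ∧ 0 ≤ b ∧ b < n) ∨
      (a + b = -n ∧ -n < a ∧ a ≤ 0) ∨ (b = -n ∧ 0 < a ∧ a ≤ n) := by omega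
  simp only [mem_Ico]
  rcases side with h | h | h | h | h | h
  · exact ⟨0, by norm_num, -b, by omega, by simp [h.1]⟩
  · exact ⟨1, by norm_num, a, by omega, by simp [hexRotate]; omega⟩
  · exact ⟨2, by norm_num, a + n, by omega, by simp [hexRotate]; omega⟩
  · exact ⟨3, by norm_num, b, by omega, by simp [hexRotate]; omega⟩
  · exact ⟨4, by norm_num, -a, by omega, by simp [hexRotate]; omega⟩
  · exact ⟨5, by norm_num, n - a, by omega, by simp [hexRotate]; omega⟩

lemma card_filter_hexNorm_eq_le (s : Finset (ℤ × ℤ)) (hs : 0 ∉ s) (n : ℕ) :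
    #{q ∈ s | hexNorm q = n} ≤ 6 * n :=
  calc #{q ∈ s | hexNorm q = n}
      ≤ #((range 6 ×ˢ Ico (0 : ℤ) n).image fun p ↦ hexRotate^[p.1] (n, -p.2)) := by
        refine card_le_card fun q hq ↦ ?_
        obtain ⟨hqs, rfl⟩ := mem_filter.1 hq
        obtain ⟨k, hk, j, hj, hkj⟩ := exists_hexRotate_iterate_eq (ne_of_mem_of_not_mem hqs hs)
        exact mem_image.2 ⟨(k, j), mem_product.2 ⟨mem_range.2 hk, hj⟩, hkj⟩
    _ ≤ #(range 6 ×ˢ Ico (0 : ℤ) n) := card_image_le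
    _ = 6 * n := by simp

/-- `4 (a² + a b + b²) = 3 a² + (a + 2b)² = 3 b² + (2a + b)² = 3 (a + b)² + (a - b)²`. -/
lemma three_mul_hexNorm_sq_le (a b : ℤ) :
    3 * (hexNorm (a, b) : ℤ) ^ 2 ≤ 4 * (a ^ 2 + a * b + b ^ 2) := by
  have h : (hexNorm (a, b) : ℤ) ^ 2 = a ^ 2 ∨ (hexNorm (a, b) : ℤ) ^ 2 = b ^ 2 ∨
      (hexNorm (a, b) : ℤ) ^ 2 = (a + b) ^ 2 := by
    simp only [hexNorm, sq_eq_sq_iff_eq_or_eq_neg]; omega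
  rcases h with h | h | h <;> rw [h]
  · nlinarith [sq_nonneg (a + 2 * b)]
  · nlinarith [sq_nonneg (2 * a + b)]
  · nlinarith [sq_nonneg (a - b)]

noncomputable def hexLatticePoint (q : ℤ × ℤ) : EuclideanSpace ℝ (Fin 2) :=
  (q.1 : ℝ) • (WithLp.equiv 2 (Fin 2 → ℝ)).symm ![1, 0] +
    (q.2 : ℝ) • (WithLp.equiv 2 (Fin 2 → ℝ)).symm ![1 / 2, Real.sqrt 3 / 2]

lemma norm_hexLatticePoint_sq (q : ℤ × ℤ) :
    ‖hexLatticePoint q‖ ^ 2 = (q.1 : ℝ) ^ 2 + q.1 * q.2 + (q.2 : ℝ) ^ 2 := by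
  rw [EuclideanSpace.norm_sq_eq, Fin.sum_univ_two]
  simp only [Fin.isValue, hexLatticePoint, WithLp.equiv_symm_apply, one_div, PiLp.add_apply,
    PiLp.smul_apply, Matrix.cons_val_zero, smul_eq_mul, mul_one, Real.norm_eq_abs, sq_abs,
    Matrix.cons_val_one, Matrix.cons_val_fin_one, mul_zero, zero_add, norm_mul, norm_div,
    mul_pow, div_pow, Nat.ofNat_nonneg, Real.sq_sqrt]
  ring

noncomputable def hexShellRadius (n : ℕ) : ℝ := max 1 (Real.sqrt 3 / 2 * n)

lemma hexShellRadius_le_norm_hexLatticePoint {q : ℤ × ℤ} (hq : q ≠ 0) :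
    hexShellRadius (hexNorm q) ≤ ‖hexLatticePoint q‖ := by
  obtain ⟨a, b⟩ := q
  have hN := Nat.one_le_iff_ne_zero.2 (hexNorm_ne_zero hq)
  have hQ := three_mul_hexNorm_sq_le a b
  have hQ1 : 1 ≤ a ^ 2 + a * b + b ^ 2 := by
    have : 1 ≤ (hexNorm (a, b) : ℤ) ^ 2 := one_le_pow₀ (by exact_mod_cast hN)
    omega
  have hQ1' : 1 ^ 2 ≤ ‖hexLatticePoint (a, b)‖ ^ 2 := by
    rw [norm_hexLatticePoint_sq, one_pow]; exact_mod_cast hQ1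
  have hQ' : (Real.sqrt 3 / 2 * hexNorm (a, b)) ^ 2 ≤ ‖hexLatticePoint (a, b)‖ ^ 2 := by
    rw [norm_hexLatticePoint_sq, mul_pow, div_pow, Real.sq_sqrt zero_le_three]
    have : (3 * (hexNorm (a, b) : ℤ) ^ 2 : ℝ) ≤ 4 * (a ^ 2 + a * b + b ^ 2) := by
      exact_mod_cast hQ
    push_cast at this ⊢
    linarith
  exact max_le (le_of_sq_le_sq hQ1' (norm_nonneg _)) (le_of_sq_le_sq hQ' (norm_nonneg _))

lemma one_le_hexShellRadius (n : ℕ) : 1 ≤ hexShellRadius n := le_max_left _ _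

lemma natCast_mul_hexShellRadius_rpow_neg {n : ℕ} (hn : 2 ≤ n) (α : ℝ) :
    (n : ℝ) * hexShellRadius n ^ (-α) = (2 / Real.sqrt 3) ^ α * (n : ℝ) ^ (-(α - 1)) := by
  have hn' : (2 : ℝ) ≤ n := by exact_mod_cast hn
  have h3 : 1 ≤ Real.sqrt 3 := Real.one_le_sqrt.2 (by norm_num)
  rw [hexShellRadius, max_eq_right (by nlinarith), Real.mul_rpow (by positivity) (by positivity),
    Real.rpow_neg (by positivity), ← Real.inv_rpow (by positivity), inv_div,
    show -(α - 1) = 1 + -α by ring, Real.rpow_add (by positivity), Real.rpow_one]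
  ring

lemma sum_mul_hexShellRadius_rpow_neg_le {α : ℝ} (hα : 2 < α) (T : Finset ℕ) :
    ∑ n ∈ T, ((6 * n : ℕ) : ℝ) * hexShellRadius n ^ (-α) ≤
      6 * (1 + (2 / Real.sqrt 3) ^ α * (1 / (α - 2))) := by
  have hterm : ∀ n : ℕ, 0 ≤ ((6 * n : ℕ) : ℝ) * hexShellRadius n ^ (-α) := fun n ↦
    mul_nonneg (Nat.cast_nonneg _)
      (Real.rpow_nonneg (zero_le_one.trans (one_le_hexShellRadius n)) _)
  have hone : hexShellRadius 1 = 1 := by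
    rw [hexShellRadius, max_eq_left]
    have : Real.sqrt 3 ≤ 2 := Real.sqrt_le_iff.2 ⟨by norm_num, by norm_num⟩
    push_cast; linarith
  obtain ⟨m, hm⟩ := T.exists_nat_subset_range
  calc ∑ n ∈ T, ((6 * n : ℕ) : ℝ) * hexShellRadius n ^ (-α)
      ≤ ∑ n ∈ range (m + 2), ((6 * n : ℕ) : ℝ) * hexShellRadius n ^ (-α) :=
        sum_le_sum_of_subset_of_nonneg (hm.trans (range_mono (Nat.le_add_right m 2)))
          fun n _ _ ↦ hterm n
    _ = 6 * (2 / Real.sqrt 3) ^ α * ∑ i ∈ range m, ((i : ℝ) + 2) ^ (-(α - 1)) + 6 := by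
        rw [sum_range_succ', sum_range_succ', mul_sum]
        simp only [Nat.cast_mul, mul_assoc,
          natCast_mul_hexShellRadius_rpow_neg (Nat.le_add_left 2 _)]
        simp [hone]
    _ ≤ 6 * (2 / Real.sqrt 3) ^ α * (1 / (α - 1 - 1)) + 6 := by
        gcongr
        exact sum_range_add_two_rpow_neg_le (by linarith) m
    _ = 6 * (1 + (2 / Real.sqrt 3) ^ α * (1 / (α - 2))) := by ring_nf

lemma sum_norm_smul_hexLatticePoint_rpow_neg_le {α D : ℝ} (hα : 2 < α) (hD : 0 < D)
    (s : Finset (ℤ × ℤ)) (hs : 0 ∉ s) :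
    ∑ q ∈ s, ‖D • hexLatticePoint q‖ ^ (-α) ≤
      6 * D ^ (-α) * (1 + (2 / Real.sqrt 3) ^ α * (1 / (α - 2))) := by
  simp_rw [norm_smul, Real.norm_of_nonneg hD.le, Real.mul_rpow hD.le (norm_nonneg _), ← mul_sum,
    mul_comm 6 (D ^ (-α)), mul_assoc]
  gcongr
  calc ∑ q ∈ s, ‖hexLatticePoint q‖ ^ (-α)
      ≤ ∑ n ∈ s.image hexNorm, ((6 * n : ℕ) : ℝ) * hexShellRadius n ^ (-α) := by
        refine sum_le_sum_image_mul_of_card_fiber_le s hexNorm _ _ _ (fun q hq ↦ ?_)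
          (fun n ↦ Real.rpow_nonneg (zero_le_one.trans (one_le_hexShellRadius n)) _)
          (card_filter_hexNorm_eq_le s hs)
        exact Real.rpow_le_rpow_of_nonpos (zero_lt_one.trans_le (one_le_hexShellRadius _))
          (hexShellRadius_le_norm_hexLatticePoint (ne_of_mem_of_not_mem hq hs)) (by linarith)
    _ ≤ _ := sum_mul_hexShellRadius_rpow_neg_le hα _

/-- **Hexagonal lattice interference sum.** Over the nonzero points of the hexagonal
lattice with basis `u = (1,0)`, `v = (1/2, √3/2)` scaled by `D` (minimum distance `D`),
the family `‖x‖^(−α)` is summable and its sum is at most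
`6·D^(−α)·(1 + (2/√3)^α·1/(α−2))`. -/
theorem hexagonal_lattice_sum_bound
    (α D : ℝ) (hα : 2 < α) (hD : 0 < D)
    (u v : EuclideanSpace ℝ (Fin 2))
    (hu : u = (WithLp.equiv 2 (Fin 2 → ℝ)).symm ![1, 0])
    (hv : v = (WithLp.equiv 2 (Fin 2 → ℝ)).symm ![1 / 2, Real.sqrt 3 / 2])
    (Λ : Set (EuclideanSpace ℝ (Fin 2)))
    (hΛ : Λ = {x | ∃ q : ℤ × ℤ, q ≠ 0 ∧ x = D • ((q.1 : ℝ) • u + (q.2 : ℝ) • v)}) :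
    Summable (fun x : Λ => ‖(x : EuclideanSpace ℝ (Fin 2))‖ ^ (-α)) ∧
    ∑' x : Λ, ‖(x : EuclideanSpace ℝ (Fin 2))‖ ^ (-α)
      ≤ 6 * D ^ (-α) * (1 + (2 / Real.sqrt 3) ^ α * (1 / (α - 2))) := by
  subst hu hv
  choose e he0 he using
    fun x : Λ ↦ (hΛ ▸ x.2 : ∃ q : ℤ × ℤ, q ≠ 0 ∧ x = D • hexLatticePoint q)
  have he_inj : Function.Injective e := fun x y h ↦ Subtype.ext (by rw [he x, he y, h])
  have hpartial : ∀ t : Finset Λ, ∑ x ∈ t, ‖(x : EuclideanSpace ℝ (Fin 2))‖ ^ (-α) ≤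
      6 * D ^ (-α) * (1 + (2 / Real.sqrt 3) ^ α * (1 / (α - 2))) := fun t ↦ calc
    _ = ∑ q ∈ t.image e, ‖D • hexLatticePoint q‖ ^ (-α) := by
        rw [sum_image he_inj.injOn]; exact sum_congr rfl fun x _ ↦ by rw [← he]
    _ ≤ _ := sum_norm_smul_hexLatticePoint_rpow_neg_le hα hD _ fun h ↦
        let ⟨x, _, hx⟩ := mem_image.1 h; he0 x hx
  have hnonneg : 0 ≤ fun x : Λ ↦ ‖(x : EuclideanSpace ℝ (Fin 2))‖ ^ (-α) :=
    fun _ ↦ Real.rpow_nonneg (norm_nonneg _) _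
  exact ⟨summable_of_sum_le hnonneg hpartial, Real.tsum_le_of_sum_le hnonneg hpartial⟩
end

section
/- For every real d > 0 the following two facts hold, exhibiting a three-link configuration (equal link lengths d, with γ0 = 8, α = 3) that is permitted by the pairwise-model safe carrier-sensing range 4d = (γ0^(1/α) + 2)·d but suffers a collision under cumulative interference: (i) the power sensed by the third transmitter from senders at distances 5d and 8d is below the threshold corresponding to range 4d, i.e., (5d)^(−3) + (8d)^(−3) < (4d)^(−3); and (ii) the SIR at the first receiver, whose own transmitter is at distance d and which suffers cumulative interference from senders at distances 6d and 2d, equals d^(−3) / ((6d)^(−3) + (2d)^(−3)) = 54/7, which is strictly less than 8. -/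
theorem zpow_mul_add_zpow_mul_lt_zpow_mul_iff {K : Type*} [Field K] [LinearOrder K]
    [IsStrictOrderedRing K] {a b c d : K} (n : ℤ) (hd : 0 < d) :
    (a * d) ^ n + (b * d) ^ n < (c * d) ^ n ↔ a ^ n + b ^ n < c ^ n := by
  simp only [mul_zpow, ← add_mul]
  exact mul_lt_mul_iff_of_pos_right (zpow_pos hd n)

theorem zpow_div_zpow_mul_add_zpow_mul {K : Type*} [Field K] {a b d : K} (n : ℤ) (hd : d ≠ 0) :
    d ^ n / ((a * d) ^ n + (b * d) ^ n) = (a ^ n + b ^ n)⁻¹ := by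
  rw [mul_zpow, mul_zpow, ← add_mul]
  exact div_mul_cancel_right₀ (zpow_ne_zero n hd) _

/-- **Counterexample: the pairwise-model safe carrier-sensing range fails under
cumulative interference** (three links of equal length `d`, `γ0 = 8`, `α = 3`):
(i) the third transmitter, at distances `5d` and `8d` from the two active senders,
senses a power below the threshold for the range `4d`; (ii) yet the SIR at the first
receiver equals `54/7 < 8`. -/
theorem pairwise_csr_insufficient_example (d : ℝ) (hd : 0 < d) :
    (5 * d) ^ (-3 : ℤ) + (8 * d) ^ (-3 : ℤ) < (4 * d) ^ (-3 : ℤ) ∧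
    d ^ (-3 : ℤ) / ((6 * d) ^ (-3 : ℤ) + (2 * d) ^ (-3 : ℤ)) = 54 / 7 ∧
    (54 / 7 : ℝ) < 8 := by
  rw [zpow_mul_add_zpow_mul_lt_zpow_mul_iff _ hd, zpow_div_zpow_mul_add_zpow_mul _ hd.ne']
  norm_num
end
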